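/- Let Graph denote the category whose objects are (bundled) simple graphs and whose morphisms are graph maps, with the evident identities and composition. There is no model category structure on Graph (in the sense of Quillen: classes of weak equivalences, fibrations, and cofibrations satisfying the model category axioms) in which the class of weak equivalences is exactly the class of A-homotopy equivalences. -/

import Mathlib

/-! Factor the diagonal `ℤ → ℤ ⊠ ℤ` of the line as a trivial cofibration `w : ℤ → P` followed
by a fibration `q : P → ℤ ⊠ ℤ`. A homotopy inverse of `w` comes with a homotopy of some fixed
length to the identity of `P`, and a homotopy of length `N` moves points of the line by at most
`N`; as `w` lands over the diagonal, `q` stays within bounded distance of the diagonal. But `q`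
lifts paths: the basepoint `pt → C` of a cofibrant replacement `C → I_n` of the contractible path
is a trivial cofibration, and `C → I_n` is onto because `∅ → pt` is a cofibration. Lifting the
path from `(0, 0)` to `(n, 0)` for large `n` is the contradiction. -/

open CategoryTheory

universe u v

/-- The path graph `I_N` on vertices `{0, 1, …, N}`, with `i` adjacent to `j` iff `|i - j| = 1`. -/
def pathG (N : ℕ) : SimpleGraph (Fin (N + 1)) where
  Adj i j := (i : ℕ) + 1 = (j : ℕ) ∨ (j : ℕ) + 1 = (i : ℕ)
  symm := ⟨fun i j h => h.symm⟩
  loopless := ⟨fun i h => by rcases h with h | h <;> omega⟩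

/-- A graph map `f : G → H`: for adjacent `u v` in `G`, either `f u = f v` or
`f u, f v` are adjacent in `H`. -/
def IsGraphMap {V W : Type*} (G : SimpleGraph V) (H : SimpleGraph W) (f : V → W) : Prop :=
  ∀ ⦃u v⦄, G.Adj u v → f u = f v ∨ H.Adj (f u) (f v)

/-- An object of the category `Graph`: a bundled simple graph. -/
structure GraphCat : Type 1 where
  V : Type
  graph : SimpleGraph V

/-- A morphism of bundled simple graphs: a graph map. -/
@[ext]
structure GraphHom (X Y : GraphCat) where
  toFun : X.V → Y.V
  isGraphMap : IsGraphMap X.graph Y.graph toFun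

/-- The category of simple graphs and graph maps. -/
instance : Category GraphCat where
  Hom := GraphHom
  id X := ⟨id, fun _ _ h => Or.inr h⟩
  comp f g :=
    ⟨g.toFun ∘ f.toFun, fun u v h => by
      rcases f.isGraphMap h with h' | h'
      · exact Or.inl (congrArg g.toFun h')
      · exact g.isGraphMap h'⟩
  id_comp f := rfl
  comp_id f := rfl
  assoc f g h := rfl

/-- Graph maps `f, g : G → H` are A-homotopic if there are `N` and a graph map
`α : G □ I_N → H` with `α (-, 0) = f` and `α (-, N) = g`. -/
def AHomotopic {X Y : GraphCat} (f g : X ⟶ Y) : Prop :=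
  ∃ (N : ℕ) (α : X.V × Fin (N + 1) → Y.V),
    IsGraphMap (X.graph.boxProd (pathG N)) Y.graph α ∧
    (∀ v, α (v, 0) = f.toFun v) ∧ (∀ v, α (v, Fin.last N) = g.toFun v)

/-- A graph map `f : G → H` is an A-homotopy equivalence if it has an inverse up to
A-homotopy. -/
def IsAHomotopyEquiv {X Y : GraphCat} (f : X ⟶ Y) : Prop :=
  ∃ g : Y ⟶ X, AHomotopic (f ≫ g) (𝟙 X) ∧ AHomotopic (g ≫ f) (𝟙 Y)

/-- `f` is a retract of `g` in the arrow category. -/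
def IsRetractMor {C : Type u} [Category.{v} C] {X Y X' Y' : C} (f : X ⟶ Y) (g : X' ⟶ Y') : Prop :=
  ∃ (i : X ⟶ X') (r : X' ⟶ X) (j : Y ⟶ Y') (s : Y' ⟶ Y),
    i ≫ r = 𝟙 X ∧ j ≫ s = 𝟙 Y ∧ i ≫ g = f ≫ j ∧ g ≫ s = r ≫ f

/-- A model category structure in the sense of Quillen: classes of weak equivalences, fibrations
and cofibrations on a category with finite limits and colimits, satisfying two-out-of-three,
closure under retracts, lifting, and factorization. -/
structure ModelStructure (C : Type u) [Category.{v} C] where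
  weq : MorphismProperty C
  fib : MorphismProperty C
  cof : MorphismProperty C
  hasFiniteLimits : Limits.HasFiniteLimits C
  hasFiniteColimits : Limits.HasFiniteColimits C
  weq_comp : ∀ {X Y Z : C} (f : X ⟶ Y) (g : Y ⟶ Z), weq f → weq g → weq (f ≫ g)
  weq_of_comp_left : ∀ {X Y Z : C} (f : X ⟶ Y) (g : Y ⟶ Z), weq f → weq (f ≫ g) → weq g
  weq_of_comp_right : ∀ {X Y Z : C} (f : X ⟶ Y) (g : Y ⟶ Z), weq g → weq (f ≫ g) → weq f
  weq_retract : ∀ {X Y X' Y' : C} (f : X ⟶ Y) (g : X' ⟶ Y'),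
    IsRetractMor f g → weq g → weq f
  fib_retract : ∀ {X Y X' Y' : C} (f : X ⟶ Y) (g : X' ⟶ Y'),
    IsRetractMor f g → fib g → fib f
  cof_retract : ∀ {X Y X' Y' : C} (f : X ⟶ Y) (g : X' ⟶ Y'),
    IsRetractMor f g → cof g → cof f
  lift_cof_trivFib : ∀ {A B X Y : C} (i : A ⟶ B) (p : X ⟶ Y), cof i → fib p → weq p →
    ∀ (u : A ⟶ X) (v : B ⟶ Y), u ≫ p = i ≫ v → ∃ l : B ⟶ X, i ≫ l = u ∧ l ≫ p = v
  lift_trivCof_fib : ∀ {A B X Y : C} (i : A ⟶ B) (p : X ⟶ Y), cof i → weq i → fib p →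
    ∀ (u : A ⟶ X) (v : B ⟶ Y), u ≫ p = i ≫ v → ∃ l : B ⟶ X, i ≫ l = u ∧ l ≫ p = v
  fact_cof_trivFib : ∀ {X Y : C} (f : X ⟶ Y),
    ∃ (Z : C) (i : X ⟶ Z) (p : Z ⟶ Y), cof i ∧ fib p ∧ weq p ∧ i ≫ p = f
  fact_trivCof_fib : ∀ {X Y : C} (f : X ⟶ Y),
    ∃ (Z : C) (i : X ⟶ Z) (p : Z ⟶ Y), cof i ∧ weq i ∧ fib p ∧ i ≫ p = f

open Limits SimpleGraph

namespace ModelStructure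

variable {C : Type u} [Category.{v} C] (M : ModelStructure C)

lemma cof_of_isInitial {A B : C} (hA : IsInitial A) (f : A ⟶ B)
    (hsec : ∀ {Z : C} (p : Z ⟶ B), M.fib p → M.weq p → ∃ s : B ⟶ Z, s ≫ p = 𝟙 B) : M.cof f := by
  obtain ⟨Z, i, p, hi, hpf, hpw, rfl⟩ := M.fact_cof_trivFib f
  obtain ⟨s, hs⟩ := hsec p hpf hpw
  exact M.cof_retract _ i ⟨𝟙 A, 𝟙 A, s, p, Category.id_comp _, hs, hA.hom_ext _ _,
    (Category.id_comp _).symm⟩ hi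

lemma exists_lift_of_isInitial {A B X Y : C} (hA : IsInitial A) (i : A ⟶ B) (hi : M.cof i)
    (p : X ⟶ Y) (hpf : M.fib p) (hpw : M.weq p) (v : B ⟶ Y) : ∃ l : B ⟶ X, l ≫ p = v :=
  (M.lift_cof_trivFib i p hi hpf hpw (hA.to X) v (hA.hom_ext _ _)).imp fun _ h => h.2

end ModelStructure

lemma IsGraphMap.comp {U V W : Type*} {F : SimpleGraph U} {G : SimpleGraph V}
    {H : SimpleGraph W} {f : U → V} {g : V → W} (hg : IsGraphMap G H g) (hf : IsGraphMap F G f) :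
    IsGraphMap F H (g ∘ f) := fun _ _ h => (hf h).elim (fun e => Or.inl (congrArg g e)) (hg ·)

lemma hasse_int_adj {a b : ℤ} : (hasse ℤ).Adj a b ↔ a + 1 = b ∨ b + 1 = a := by
  simp only [hasse_adj, Order.covBy_iff_add_one_eq]

lemma IsGraphMap.abs_sub_le_one {V : Type*} {G : SimpleGraph V} {f : V → ℤ}
    (hf : IsGraphMap G (hasse ℤ) f) {u v : V} (h : G.Adj u v) : |f u - f v| ≤ 1 := by
  rcases hf h with e | e
  · simp [e]
  · rw [hasse_int_adj] at e
    rw [abs_le]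
    omega

lemma IsGraphMap.abs_sub_le_of_pathG {L : ℕ} {β : Fin (L + 1) → ℤ}
    (hβ : IsGraphMap (pathG L) (hasse ℤ) β) : |β (Fin.last L) - β 0| ≤ L := by
  suffices h : ∀ k (hk : k < L + 1), |β ⟨k, hk⟩ - β 0| ≤ k from h L L.lt_succ_self
  intro k hk
  induction k with
  | zero => simp
  | succ k ih =>
    have hstep := hβ.abs_sub_le_one (u := ⟨k + 1, hk⟩) (v := ⟨k, by omega⟩) (Or.inr rfl)
    have hk' := ih (by omega)
    rw [abs_le] at hstep hk' ⊢
    push_cast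
    omega

def SimpleGraph.strongProd {V W : Type*} (G : SimpleGraph V) (H : SimpleGraph W) :
    SimpleGraph (V × W) where
  Adj p q := p ≠ q ∧ (p.1 = q.1 ∨ G.Adj p.1 q.1) ∧ (p.2 = q.2 ∨ H.Adj p.2 q.2)
  symm := ⟨fun _ _ ⟨h, h1, h2⟩ =>
    ⟨Ne.symm h, h1.imp Eq.symm G.adj_symm, h2.imp Eq.symm H.adj_symm⟩⟩
  loopless := ⟨fun _ h => h.1 rfl⟩

namespace GraphCat

@[ext]
lemma hom_ext {X Y : GraphCat} {f g : X ⟶ Y} (h : ∀ x, f.toFun x = g.toFun x) : f = g :=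
  GraphHom.ext (funext h)

abbrev empty : GraphCat := ⟨Empty, ⊥⟩

abbrev pt : GraphCat := ⟨PUnit, ⊥⟩

abbrev path (n : ℕ) : GraphCat := ⟨Fin (n + 1), pathG n⟩

noncomputable abbrev line : GraphCat := ⟨ℤ, hasse ℤ⟩

/-- The product in `GraphCat`: graph maps may collapse edges, so it is the strong product. -/
abbrev prod (X Y : GraphCat) : GraphCat := ⟨X.V × Y.V, X.graph.strongProd Y.graph⟩

def const (X : GraphCat) {Y : GraphCat} (y : Y.V) : X ⟶ Y := ⟨fun _ => y, fun _ _ _ => Or.inl rfl⟩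

def emptyIsInitial : IsInitial empty :=
  IsInitial.ofUniqueHom (fun _ => ⟨Empty.elim, fun u => u.elim⟩)
    (fun _ _ => hom_ext fun u => u.elim)

def fst (X Y : GraphCat) : prod X Y ⟶ X :=
  ⟨Prod.fst, fun _ _ h => h.2.1⟩

def snd (X Y : GraphCat) : prod X Y ⟶ Y :=
  ⟨Prod.snd, fun _ _ h => h.2.2⟩

def lift {W X Y : GraphCat} (f : W ⟶ X) (g : W ⟶ Y) : W ⟶ prod X Y where
  toFun w := (f.toFun w, g.toFun w)
  isGraphMap u v h := by
    by_cases e : (f.toFun u, g.toFun u) = (f.toFun v, g.toFun v)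
    · exact Or.inl e
    · exact Or.inr ⟨e, f.isGraphMap h, g.isGraphMap h⟩

def diag (X : GraphCat) : X ⟶ prod X X := lift (𝟙 X) (𝟙 X)

def pathToLine (n : ℕ) : path n ⟶ line where
  toFun t := (t : ℕ)
  isGraphMap _ _ h := Or.inr (hasse_int_adj.mpr (by dsimp only; rcases h with h | h <;> omega))

end GraphCat

open GraphCat

lemma AHomotopic.refl {X Y : GraphCat} (f : X ⟶ Y) : AHomotopic f f := by
  refine ⟨0, fun p => f.toFun p.1, fun x y h => ?_, fun _ => rfl, fun _ => rfl⟩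
  rcases boxProd_adj.mp h with ⟨h, -⟩ | ⟨h, -⟩
  · exact f.isGraphMap h
  · rcases h with h | h <;> omega

lemma AHomotopic.comp_right {X Y Z : GraphCat} {f g : X ⟶ Y} (h : AHomotopic f g) (k : Y ⟶ Z) :
    AHomotopic (f ≫ k) (g ≫ k) := by
  obtain ⟨N, α, hα, h0, h1⟩ := h
  exact ⟨N, k.toFun ∘ α, k.isGraphMap.comp hα, fun v => congrArg k.toFun (h0 v),
    fun v => congrArg k.toFun (h1 v)⟩

/-- A homotopy of length `N` moves each point of the line by at most `N`. -/
lemma AHomotopic.exists_abs_sub_le {X : GraphCat} {f g : X ⟶ line} (h : AHomotopic f g) :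
    ∃ N : ℕ, ∀ v, |g.toFun v - f.toFun v| ≤ N := by
  obtain ⟨N, α, hα, h0, h1⟩ := h
  refine ⟨N, fun v => ?_⟩
  have hslice : IsGraphMap (pathG N) (hasse ℤ) fun t => α (v, t) :=
    hα.comp fun _ _ h => Or.inr (boxProd_adj_right.mpr h)
  simpa only [h0, h1] using hslice.abs_sub_le_of_pathG

lemma isAHomotopyEquiv_const_zero (n : ℕ) :
    IsAHomotopyEquiv (const pt (0 : Fin (n + 1)) : pt ⟶ path n) := by
  refine ⟨const _ PUnit.unit, AHomotopic.refl _, n, fun p => min p.1 p.2, fun x y h => ?_,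
    fun v => min_eq_right (Fin.zero_le v), fun v => min_eq_left (Fin.le_last v)⟩
  change _ ∨ (pathG n).Adj _ _
  simp only [pathG, Fin.ext_iff, Fin.coe_min]
  rcases boxProd_adj.mp h with ⟨h, e⟩ | ⟨h, e⟩ <;> rw [Fin.ext_iff] at e <;> rcases h with h | h <;>
    omega

namespace ModelStructure

variable (M : ModelStructure GraphCat)

lemma surjective_of_fib_of_weq
    (hW : ∀ {X Y : GraphCat} (f : X ⟶ Y), M.weq f → IsAHomotopyEquiv f)
    {X Y : GraphCat} (p : X ⟶ Y) (hpf : M.fib p) (hpw : M.weq p) : Function.Surjective p.toFun := by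
  have hcof : M.cof (emptyIsInitial.to pt) :=
    M.cof_of_isInitial emptyIsInitial _ fun p _ hp =>
      (hW p hp).imp fun _ _ => hom_ext fun _ => rfl
  intro y
  obtain ⟨l, hl⟩ := M.exists_lift_of_isInitial emptyIsInitial _ hcof p hpf hpw (const pt y)
  exact ⟨l.toFun PUnit.unit, congrArg (fun f => f.toFun PUnit.unit) hl⟩

/-- The basepoint `pt → C` of a cofibrant replacement `C → I_n` is a trivial cofibration, as
`I_n` is contractible. -/
lemma exists_lift_of_fib_of_path
    (hW : ∀ {X Y : GraphCat} (f : X ⟶ Y), M.weq f ↔ IsAHomotopyEquiv f)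
    {P Y : GraphCat} (q : P ⟶ Y) (hq : M.fib q) {n : ℕ} (γ : path n ⟶ Y) (p₀ : P.V)
    (hp₀ : q.toFun p₀ = γ.toFun 0) : ∃ p, q.toFun p = γ.toFun (Fin.last n) := by
  obtain ⟨C, c, τ, hc, hτf, hτw, hcτ⟩ := 
    M.fact_cof_trivFib (const pt (0 : Fin (n + 1)) : pt ⟶ path n)
  have hcw : M.weq c :=
    M.weq_of_comp_right c τ hτw ((hW _).mpr (hcτ ▸ isAHomotopyEquiv_const_zero n))
  obtain ⟨x, hx⟩ := M.surjective_of_fib_of_weq (fun f => (hW f).mp) τ hτf hτw (Fin.last n)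
  obtain ⟨l, -, hl⟩ := M.lift_trivCof_fib c q hc hcw hq (const pt p₀) (τ ≫ γ) <| by
    ext
    exact hp₀.trans (congrArg γ.toFun (congrArg (fun f => f.toFun PUnit.unit) hcτ).symm)
  exact ⟨l.toFun x, (congrArg (fun f => f.toFun x) hl).trans (congrArg γ.toFun hx)⟩

end ModelStructure

lemma exists_abs_fst_sub_snd_le {P : GraphCat} (w : line ⟶ P) (q : P ⟶ prod line line)
    (hwq : w ≫ q = diag line) (hw : IsAHomotopyEquiv w) :
    ∃ N : ℕ, ∀ p, |(q.toFun p).1 - (q.toFun p).2| ≤ N := by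
  obtain ⟨g, -, hgw⟩ := hw
  have hdiag (k : prod line line ⟶ line) (hk : diag line ≫ k = 𝟙 line) :
      AHomotopic g (q ≫ k) := by
    simpa only [Category.assoc, reassoc_of% hwq, hk, Category.comp_id, Category.id_comp]
      using hgw.comp_right (q ≫ k)
  obtain ⟨N₁, h₁⟩ := (hdiag (fst line line) rfl).exists_abs_sub_le
  obtain ⟨N₂, h₂⟩ := (hdiag (snd line line) rfl).exists_abs_sub_le
  refine ⟨N₁ + N₂, fun p => ?_⟩
  calc |(q.toFun p).1 - (q.toFun p).2|
      ≤ |(q.toFun p).1 - g.toFun p| + |(q.toFun p).2 - g.toFun p| :=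
        (abs_sub_le _ _ _).trans_eq (by rw [abs_sub_comm (g.toFun p)])
    _ ≤ N₁ + N₂ := add_le_add (h₁ p) (h₂ p)
    _ = (N₁ + N₂ : ℕ) := by push_cast; rfl

/-- There is no model structure on the category of simple graphs whose weak equivalences are
exactly the A-homotopy equivalences. -/
theorem no_model_structure_on_graphs :
    ¬ ∃ M : ModelStructure GraphCat,
        ∀ {X Y : GraphCat} (f : X ⟶ Y), M.weq f ↔ IsAHomotopyEquiv f := by
  rintro ⟨M, hW⟩
  obtain ⟨P, w, q, -, hw, hq, hwq⟩ := M.fact_trivCof_fib (diag line)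
  obtain ⟨N, hN⟩ := exists_abs_fst_sub_snd_le w q hwq ((hW w).mp hw)
  obtain ⟨p, hp⟩ := M.exists_lift_of_fib_of_path hW q hq
    (lift (pathToLine (N + 1)) (const _ 0)) (w.toFun 0)
    (congrArg (fun f => f.toFun 0) hwq)
  have hfar : |((N + 1 : ℕ) : ℤ) - 0| ≤ N := by
    have h := hN p
    rw [hp] at h
    exact h
  rw [sub_zero, abs_of_nonneg (by positivity)] at hfar
  omega
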